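/- arXiv:math/0503421 — 2 statements merged into one kernel-verified Lean document; each statement's English description precedes it below -/
import Mathlib

section
/- (Uniform growth speed in singularity sets.) Let (Ω,ℱ,ℙ) be a probability space, b ≥ 2 an integer, N ≥ 1, Λ an index set, ε̃ = (ε_n)_{n≥1} and η̃ = (η_n)_{n≥1} positive sequences, (ρ_j)_{j≥0} a sequence of positive reals, (ψ_j)_{j≥0} and (S_j)_{j≥0} sequences of positive integers with S_j ≥ ψ_j for all j. Suppose that for each word w ∈ A^* one is given families of random finite positive Borel measures (m^w_λ)_{λ∈Λ} and (μ^w_λ)_{λ∈Λ} on [0,1] whose elements have support [0,1], reals (α_λ)_{λ∈Λ} with α_λ > 0, and nonnegative random variables U^w and (V^w_n)_{n≥1} such that: (i) the random vectors (U^w, (V^w_n)_{n≥1}), w ∈ A^*, all have the same distribution as a fixed (U, (V_n)_{n≥1}) with values in ℝ_+ × ℝ_+^ℕ; (ii) almost surely, for every w ∈ A^* and every n ≥ ψ_{|w|}, U^w ≤ inf_{λ∈Λ} ‖m^w_λ‖ and V^w_n ≥ sup_{λ∈Λ} S_n^{N,ε_n,η_n}(m^w_λ, μ^w_λ, α_λ).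 If ∑_{j≥0} b^j ℙ(U ≤ b^{−ρ_j}) < ∞ and ∑_{j≥0} b^j b^{ρ_j} ∑_{k≥S_j} E(V_k) < ∞, then with probability one, for all sufficiently large j, for every w ∈ A^j and every λ ∈ Λ one has m^w_λ(E^{μ^w_λ}_{α_λ, S_j}(N, ε̃)) ≥ ‖m^w_λ‖/2. -/
open MeasureTheory

/-- The closed `b`-adic interval `[k b^{-n}, (k+1) b^{-n}]`. -/
noncomputable def badicI (b n k : ℕ) : Set ℝ :=
  Set.Icc ((k : ℝ) / (b : ℝ) ^ n) (((k : ℝ) + 1) / (b : ℝ) ^ n)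

/-- The index of the `b`-adic interval of generation `n` containing `t` (for `t ∈ [0,1)`). -/
noncomputable def idx (b n : ℕ) (t : ℝ) : ℕ :=
  min ⌊t * (b : ℝ) ^ n⌋₊ (b ^ n - 1)

/-- The quantity `S_n^{N,ε,η}(m,μ,α)`. -/
noncomputable def Sq (b N n : ℕ) (ε η α : ℝ) (m μ : Measure ℝ) : ℝ :=
  ∑ γ ∈ ({-1, 1} : Finset ℤ),
    (b : ℝ) ^ ((n : ℝ) * (α - (γ : ℝ) * ε) * (γ : ℝ) * η) *
      ∑ k ∈ Finset.range (b ^ n), ∑ l ∈ Finset.range (b ^ n),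
        if ((k : ℤ) - (l : ℤ)).natAbs ≤ N then
          (m (badicI b n k)).toReal * ((μ (badicI b n l)).toReal) ^ ((γ : ℝ) * η)
        else 0

/-- The set `E^μ_α(N,ε,γ)` at generation `n`. -/
noncomputable def Eset (b N n : ℕ) (ε α : ℝ) (γ : ℤ) (μ : Measure ℝ) : Set ℝ :=
  {t | t ∈ Set.Icc (0:ℝ) 1 ∧ ∀ k < b ^ n, ((k : ℤ) - (idx b n t : ℤ)).natAbs ≤ N →
    (b : ℝ) ^ ((γ : ℝ) * (n : ℝ) * (α - (γ : ℝ) * ε)) *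
      ((μ (badicI b n k)).toReal) ^ ((γ : ℝ)) ≤ 1}

/-! Fix a word and a parameter `λ`. A point of `[0,1]` missing `E_n` lies in a `b`-adic cell `I_v`
having a neighbour `I_l`, `|v - l| ≤ N`, where `b^{γ n (α - γ ε)} μ(I_l)^γ > 1`; raising this to
the power `η` gives `m(I_v) ≤ b^{n(α-γε)γη} m(I_v) μ(I_l)^{γη}`, so the `m`-mass missing `E_n` is at
most `S_n`, and the mass missing `E_{α,S_j}` is at most `∑_{n ≥ S_j} V_n`. By Markov's inequality
and a union bound over the `b^j` words of generation `j`, the probability that some word has mass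
`≤ b^{-ρ_j}` or tail `∑_{n ≥ S_j} V_n > b^{-ρ_j}/2` is summable in `j`, so by Borel–Cantelli
eventually every word has mass `> b^{-ρ_j}` and lost mass `≤ b^{-ρ_j}/2`. -/

open scoped ENNReal

lemma one_le_rpow_mul_rpow_of_one_lt {B y e γ η : ℝ} (hB : 0 ≤ B) (hy : 0 ≤ y) (hη : 0 ≤ η)
    (h : 1 < B ^ e * y ^ γ) : 1 ≤ B ^ (e * η) * y ^ (γ * η) := by
  calc (1:ℝ) = 1 ^ η := (Real.one_rpow η).symm
    _ ≤ (B ^ e * y ^ γ) ^ η := Real.rpow_le_rpow zero_le_one h.le hη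
    _ = B ^ (e * η) * y ^ (γ * η) := by
      rw [Real.mul_rpow (Real.rpow_nonneg hB _) (Real.rpow_nonneg hy _), ← Real.rpow_mul hB,
        ← Real.rpow_mul hy]

lemma measure_sdiff_biInter_Ici_le_tsum {α : Type*} [MeasurableSpace α] (m : Measure α)
    (s : Set α) (F : ℕ → Set α) (S : ℕ) :
    m (s \ ⋂ n ∈ {n : ℕ | S ≤ n}, F n) ≤ ∑' i, m (s \ F (S + i)) := by
  refine (measure_mono ?_).trans (measure_iUnion_le _)
  rintro t ⟨hts, htF⟩
  simp only [Set.mem_iInter, Set.mem_ofPred_eq, not_forall] at htF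
  obtain ⟨n, hn, htn⟩ := htF
  exact Set.mem_iUnion.2 ⟨n - S, hts, by rwa [Nat.add_sub_cancel' hn]⟩

lemma half_le_measure_of_measure_sdiff_le {α : Type*} [MeasurableSpace α] {m : Measure α}
    {s X : Set α} (hs : m s ≠ ∞) (h : m (s \ X) ≤ m s / 2) : m s / 2 ≤ m X := by
  have hhalf : m s / 2 ≠ ∞ := (ENNReal.div_lt_top hs two_ne_zero).ne
  rw [← ENNReal.add_le_add_iff_right hhalf, ENNReal.add_halves]
  calc m s ≤ m (s ∩ X) + m (s \ X) := measure_le_inter_add_sdiff _ _ _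
    _ ≤ m X + m s / 2 := add_le_add (measure_mono Set.inter_subset_right) h

section Dyadic

variable {b : ℕ}

lemma idx_lt (hb : 0 < b) (n : ℕ) (t : ℝ) : idx b n t < b ^ n := by
  have hpos : 0 < b ^ n := Nat.pow_pos hb
  have : idx b n t ≤ b ^ n - 1 := min_le_right _ _
  omega

lemma mem_badicI_idx (hb : 0 < b) (n : ℕ) {t : ℝ} (ht : t ∈ Set.Icc (0:ℝ) 1) :
    t ∈ badicI b n (idx b n t) := by
  have hM : (0:ℝ) < (b:ℝ) ^ n := by positivity
  have hx0 : 0 ≤ t * (b:ℝ) ^ n := mul_nonneg ht.1 hM.le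
  rw [badicI, Set.mem_Icc, div_le_iff₀ hM, le_div_iff₀ hM]
  constructor
  · calc (idx b n t : ℝ) ≤ ⌊t * (b:ℝ) ^ n⌋₊ := Nat.cast_le.2 (min_le_left _ _)
      _ ≤ t * (b:ℝ) ^ n := Nat.floor_le hx0
  · rcases min_choice ⌊t * (b:ℝ) ^ n⌋₊ (b ^ n - 1) with h | h <;> rw [idx, h]
    · exact (Nat.lt_floor_add_one _).le
    · have : 1 ≤ b ^ n := Nat.one_le_pow _ _ hb
      push_cast [Nat.cast_sub this]
      nlinarith [ht.2]

lemma exists_violation_of_notMem_Eset {N n : ℕ} {ε α : ℝ} {γ : ℤ} {μ : Measure ℝ} {t : ℝ}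
    (ht : t ∈ Set.Icc (0:ℝ) 1 \ Eset b N n ε α γ μ) :
    ∃ l < b ^ n, ((l : ℤ) - (idx b n t : ℤ)).natAbs ≤ N ∧
      1 < (b : ℝ) ^ ((γ : ℝ) * (n : ℝ) * (α - (γ : ℝ) * ε)) *
        ((μ (badicI b n l)).toReal) ^ (γ : ℝ) := by
  simpa only [Eset, Set.mem_ofPred_eq, ht.1, true_and, not_forall, not_le, exists_prop]
    using ht.2

lemma measureReal_Icc_sdiff_Eset_le (hb : 0 < b) (N n : ℕ) (ε η α : ℝ) (hη : 0 ≤ η) (γ : ℤ)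
    (m μ : Measure ℝ) [IsFiniteMeasure m] :
    m.real (Set.Icc 0 1 \ Eset b N n ε α γ μ) ≤
      (b : ℝ) ^ ((n : ℝ) * (α - (γ : ℝ) * ε) * (γ : ℝ) * η) *
        ∑ k ∈ Finset.range (b ^ n), ∑ l ∈ Finset.range (b ^ n),
          if ((k : ℤ) - (l : ℤ)).natAbs ≤ N then
            (m (badicI b n k)).toReal * ((μ (badicI b n l)).toReal) ^ ((γ : ℝ) * η)
          else 0 := by
  classical
  set c := (b : ℝ) ^ ((n : ℝ) * (α - (γ : ℝ) * ε) * (γ : ℝ) * η)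
  set y : ℕ → ℝ := fun l => (μ (badicI b n l)).toReal
  set R := Finset.range (b ^ n) ×ˢ Finset.range (b ^ n)
  set bad := R.filter fun p : ℕ × ℕ => ((p.2 : ℤ) - p.1).natAbs ≤ N ∧
    1 < (b : ℝ) ^ ((γ : ℝ) * (n : ℝ) * (α - (γ : ℝ) * ε)) * y p.2 ^ (γ : ℝ)
  have hcover : Set.Icc 0 1 \ Eset b N n ε α γ μ ⊆ ⋃ p ∈ bad, badicI b n p.1 := by
    intro t ht
    obtain ⟨l, hl, hN, h1⟩ := exists_violation_of_notMem_Eset ht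
    refine Set.mem_iUnion₂.2 ⟨(idx b n t, l), Finset.mem_filter.2 ⟨?_, hN, h1⟩,
      mem_badicI_idx hb n ht.1⟩
    exact Finset.mem_product.2 ⟨Finset.mem_range.2 (idx_lt hb n t), Finset.mem_range.2 hl⟩
  calc m.real (Set.Icc 0 1 \ Eset b N n ε α γ μ)
      ≤ ∑ p ∈ bad, m.real (badicI b n p.1) :=
        (measureReal_mono hcover (measure_ne_top _ _)).trans (measureReal_biUnion_finset_le _ _)
    _ ≤ ∑ p ∈ R, c * if ((p.1 : ℤ) - p.2).natAbs ≤ N then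
          m.real (badicI b n p.1) * y p.2 ^ ((γ : ℝ) * η) else 0 := by
        rw [Finset.sum_filter]
        refine Finset.sum_le_sum fun p _ => ?_
        split_ifs with hp hN
        · have hc : 1 ≤ c * y p.2 ^ ((γ : ℝ) * η) := by
            have := one_le_rpow_mul_rpow_of_one_lt (Nat.cast_nonneg b) ENNReal.toReal_nonneg hη hp.2
            convert this using 3; ring
          nlinarith [measureReal_nonneg (μ := m) (s := badicI b n p.1)]
        · exact absurd (by rw [← Int.natAbs_neg, neg_sub]; exact hp.1) hN
        · positivity
        · positivity
    _ = _ := by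
        rw [Finset.sum_product, Finset.mul_sum]
        simp_rw [Finset.mul_sum]
        rfl

lemma measure_Icc_sdiff_Eset_inter_le_Sq (hb : 0 < b) (N n : ℕ) (ε η α : ℝ) (hη : 0 ≤ η)
    (m μ : Measure ℝ) [IsFiniteMeasure m] :
    m (Set.Icc 0 1 \ (Eset b N n ε α (-1) μ ∩ Eset b N n ε α 1 μ))
      ≤ ENNReal.ofReal (Sq b N n ε η α m μ) := by
  rw [← ofReal_measureReal (measure_ne_top _ _), Sq, Finset.sum_pair (by decide), Set.sdiff_inter]
  exact ENNReal.ofReal_le_ofReal ((measureReal_union_le _ _).trans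
    (add_le_add (measureReal_Icc_sdiff_Eset_le hb N n ε η α hη (-1) m μ)
      (measureReal_Icc_sdiff_Eset_le hb N n ε η α hη 1 m μ)))

lemma half_measure_Icc_le_measure_iInter_Eset (hb : 0 < b) (N S : ℕ) (ε η : ℕ → ℝ)
    (hη : ∀ n, S ≤ n → 0 ≤ η n) (α : ℝ) (m μ : Measure ℝ) [IsFiniteMeasure m]
    (h : ∑' i, ENNReal.ofReal (Sq b N (S + i) (ε (S + i)) (η (S + i)) α m μ)
      ≤ m (Set.Icc 0 1) / 2) :
    m (Set.Icc 0 1) / 2 ≤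
      m (⋂ n ∈ {n : ℕ | S ≤ n}, (Eset b N n (ε n) α (-1) μ ∩ Eset b N n (ε n) α 1 μ)) := by
  refine half_le_measure_of_measure_sdiff_le (measure_ne_top _ _) ?_
  refine (measure_sdiff_biInter_Ici_le_tsum _ _ _ S).trans (le_trans ?_ h)
  exact ENNReal.tsum_le_tsum fun i =>
    measure_Icc_sdiff_Eset_inter_le_Sq hb N _ _ _ _ (hη _ (Nat.le_add_right S i)) m μ

end Dyadic

section Probability

variable {Ω : Type*} [MeasurableSpace Ω] (P : Measure Ω)

lemma measure_biUnion_range_le_mul (n : ℕ) (E : ℕ → Set Ω) {p : ℝ≥0∞}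
    (h : ∀ k < n, P (E k) ≤ p) : P (⋃ k ∈ Finset.range n, E k) ≤ n * p :=
  calc P (⋃ k ∈ Finset.range n, E k) ≤ ∑ k ∈ Finset.range n, P (E k) :=
        measure_biUnion_finset_le _ _
    _ ≤ ∑ _k ∈ Finset.range n, p := Finset.sum_le_sum fun k hk => h k (Finset.mem_range.1 hk)
    _ = n * p := by rw [Finset.sum_const, Finset.card_range, nsmul_eq_mul]

lemma measure_lt_tsum_le_div {f : ℕ → Ω → ℝ≥0∞} (hf : ∀ i, AEMeasurable (f i) P) {c : ℝ≥0∞}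
    (hc0 : c ≠ 0) (hc : c ≠ ∞) :
    P {ω | c < ∑' i, f i ω} ≤ (∑' i, ∫⁻ ω, f i ω ∂P) / c := by
  rw [← lintegral_tsum hf]
  exact (measure_mono (Set.ofPred_subset_ofPred.2 fun ω h => le_of_lt h)).trans
    (meas_ge_le_lintegral_div (AEMeasurable.tsum hf) hc0 hc)

lemma ae_eventually_forall_lt_and_tsum_le (n : ℕ → ℕ) (S : ℕ → ℕ)
    (U : ℕ → ℕ → Ω → ℝ) (V : ℕ → ℕ → ℕ → Ω → ℝ) (U0 : Ω → ℝ) (V0 : ℕ → Ω → ℝ)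
    (hU : ∀ j, ∀ k < n j, ProbabilityTheory.IdentDistrib (U j k) U0 P P)
    (hV : ∀ j, ∀ k < n j, ∀ i, ProbabilityTheory.IdentDistrib (V j k i) (V0 i) P P)
    (u : ℕ → ℝ) (c : ℕ → ℝ≥0∞) (hc0 : ∀ j, c j ≠ 0) (hc : ∀ j, c j ≠ ∞)
    (hsumU : ∑' j, (n j : ℝ≥0∞) * P {ω | U0 ω ≤ u j} ≠ ∞)
    (hsumV : ∑' j, (n j : ℝ≥0∞) *
      ((∑' i, ∫⁻ ω, ENNReal.ofReal (V0 (S j + i) ω) ∂P) / c j) ≠ ∞) :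
    ∀ᵐ ω ∂P, ∀ᶠ j in Filter.atTop, ∀ k < n j,
      u j < U j k ω ∧ ∑' i, ENNReal.ofReal (V j k (S j + i) ω) ≤ c j := by
  set bad : ℕ → ℕ → Set Ω := fun j k =>
    {ω | U j k ω ≤ u j} ∪ {ω | c j < ∑' i, ENNReal.ofReal (V j k (S j + i) ω)}
  have hbad : ∀ j, ∀ k < n j, P (bad j k) ≤ P {ω | U0 ω ≤ u j} +
      (∑' i, ∫⁻ ω, ENNReal.ofReal (V0 (S j + i) ω) ∂P) / c j := by
    intro j k hk
    refine (measure_union_le _ _).trans (add_le_add ?_ ?_)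
    · exact ((hU j k hk).measure_mem_eq measurableSet_Iic).le
    · have hV' := fun i => (hV j k hk (S j + i)).comp ENNReal.measurable_ofReal
      refine (measure_lt_tsum_le_div P (fun i => (hV' i).aemeasurable_fst) (hc0 j) (hc j)).trans ?_
      exact (congrArg (· / c j) (tsum_congr fun i => (hV' i).lintegral_eq)).le
  have hsum : ∑' j, P (⋃ k ∈ Finset.range (n j), bad j k) ≠ ∞ := by
    refine ne_top_of_le_ne_top ?_ (ENNReal.tsum_le_tsum fun j =>
      measure_biUnion_range_le_mul P (n j) (bad j) (hbad j))
    simp only [mul_add, ENNReal.tsum_add]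
    exact ENNReal.add_ne_top.2 ⟨hsumU, hsumV⟩
  filter_upwards [ae_eventually_notMem hsum] with ω hω
  filter_upwards [hω] with j hj k hk
  have hk' : ω ∉ bad j k := fun h => hj (Set.mem_biUnion (Finset.mem_range.2 hk) h)
  simpa only [bad, Set.mem_union, Set.mem_ofPred_eq, not_or, not_le, not_lt] using hk'

end Probability

lemma natCast_pow_eq_ofReal (b j : ℕ) : ((b ^ j : ℕ) : ℝ≥0∞) = ENNReal.ofReal ((b:ℝ) ^ j) := by
  rw [← ENNReal.ofReal_natCast]
  push_cast
  rfl

lemma natCast_pow_mul_div_ofReal_rpow_neg_half {b : ℕ} (hb : 0 < b) (j : ℕ) (r : ℝ)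
    (T : ℝ≥0∞) : ((b ^ j : ℕ) : ℝ≥0∞) * (T / ENNReal.ofReal ((b:ℝ) ^ (-r) / 2)) =
      2 * (ENNReal.ofReal ((b:ℝ) ^ j * (b:ℝ) ^ r) * T) := by
  have hbR : (0:ℝ) < b := by exact_mod_cast hb
  have hinv : (ENNReal.ofReal ((b:ℝ) ^ (-r) / 2))⁻¹ = 2 * ENNReal.ofReal ((b:ℝ) ^ r) := by
    rw [← ENNReal.ofReal_inv_of_pos (by positivity), inv_div, Real.rpow_neg hbR.le,
      div_eq_mul_inv, inv_inv, ENNReal.ofReal_mul zero_le_two, ENNReal.ofReal_ofNat]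
  rw [div_eq_mul_inv, hinv, natCast_pow_eq_ofReal, ENNReal.ofReal_mul (by positivity)]
  ring

/-- Words `w ∈ A^j` are encoded by their index `k < b^j`. -/
theorem uniform_growth_speed_general
    {Ω : Type*} [MeasurableSpace Ω] (P : Measure Ω)
    {Λ : Type*}
    (b : ℕ) (hb : 2 ≤ b) (N : ℕ)
    (ε η : ℕ → ℝ) (hη : ∀ n, 1 ≤ n → 0 < η n)
    (ρ : ℕ → ℝ)
    (ψ Sj : ℕ → ℕ) (hS : ∀ j, 0 < Sj j) (hSψ : ∀ j, ψ j ≤ Sj j)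
    (m μ : ℕ → ℕ → Λ → Ω → Measure ℝ)
    (hmfin : ∀ j k lam ω, IsFiniteMeasure (m j k lam ω))
    (a : Λ → ℝ)
    (U : ℕ → ℕ → Ω → ℝ) (V : ℕ → ℕ → ℕ → Ω → ℝ)
    (U0 : Ω → ℝ) (V0 : ℕ → Ω → ℝ)
    (hU0meas : Measurable U0) (hV0meas : ∀ n, Measurable (V0 n))
    (hUmeas : ∀ j k, Measurable (U j k)) (hVmeas : ∀ j k n, Measurable (V j k n))
    -- (i) identical distribution of the vectors `(U^w, (V^w_n)_n)`
    (hident : ∀ j k, k < b ^ j →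
      Measure.map (fun ω => (U j k ω, fun n => V j k n ω)) P
        = Measure.map (fun ω => (U0 ω, fun n => V0 n ω)) P)
    -- (ii) almost sure bounds
    (hbound : ∀ᵐ ω ∂P, ∀ j k, k < b ^ j → ∀ n, ψ j ≤ n → ∀ lam : Λ,
      U j k ω ≤ (m j k lam ω (Set.Icc (0:ℝ) 1)).toReal ∧
      Sq b N n (ε n) (η n) (a lam) (m j k lam ω) (μ j k lam ω) ≤ V j k n ω)
    -- summability conditions
    (hsumU : (∑' j : ℕ, ENNReal.ofReal ((b:ℝ) ^ j) *
        P {ω | U0 ω ≤ (b:ℝ) ^ (-(ρ j))}) ≠ ⊤)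
    (hsumV : (∑' j : ℕ, ENNReal.ofReal ((b:ℝ) ^ j * (b:ℝ) ^ (ρ j)) *
        ∑' n : ℕ, ∫⁻ ω, ENNReal.ofReal (V0 (Sj j + n) ω) ∂P) ≠ ⊤) :
    ∀ᵐ ω ∂P, ∃ J : ℕ, ∀ j, J ≤ j → ∀ k, k < b ^ j → ∀ lam : Λ,
      (m j k lam ω) (Set.Icc (0:ℝ) 1) / 2 ≤
        (m j k lam ω) (⋂ n ∈ {n : ℕ | Sj j ≤ n},
          (Eset b N n (ε n) (a lam) (-1) (μ j k lam ω) ∩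
           Eset b N n (ε n) (a lam) 1 (μ j k lam ω))) := by
  have hb0 : 0 < b := by omega
  have hpair : ∀ j, ∀ k < b ^ j, ProbabilityTheory.IdentDistrib
      (fun ω => (U j k ω, fun n => V j k n ω)) (fun ω => (U0 ω, fun n => V0 n ω)) P P :=
    fun j k hk => ⟨((hUmeas j k).prodMk (measurable_pi_lambda _ (hVmeas j k))).aemeasurable,
      (hU0meas.prodMk (measurable_pi_lambda _ hV0meas)).aemeasurable, hident j k hk⟩
  have hsumV' : ∑' j, ((b ^ j : ℕ) : ℝ≥0∞) * ((∑' i, ∫⁻ ω, ENNReal.ofReal (V0 (Sj j + i) ω) ∂P) /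
      ENNReal.ofReal ((b:ℝ) ^ (-(ρ j)) / 2)) ≠ ∞ := by
    simp only [natCast_pow_mul_div_ofReal_rpow_neg_half hb0, ENNReal.tsum_mul_left]
    exact ENNReal.mul_ne_top ENNReal.ofNat_ne_top hsumV
  have hgood := ae_eventually_forall_lt_and_tsum_le P (fun j => b ^ j) Sj U V U0 V0
    (fun j k hk => (hpair j k hk).comp measurable_fst)
    (fun j k hk i => (hpair j k hk).comp ((measurable_pi_apply i).comp measurable_snd))
    (fun j => (b:ℝ) ^ (-(ρ j))) (fun j => ENNReal.ofReal ((b:ℝ) ^ (-(ρ j)) / 2))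
    (fun j => by simp only [ne_eq, ENNReal.ofReal_eq_zero, not_le]; positivity)
    (fun j => ENNReal.ofReal_ne_top) (by simpa only [natCast_pow_eq_ofReal] using hsumU) hsumV'
  filter_upwards [hgood, hbound] with ω hω hbω
  obtain ⟨J, hJ⟩ := Filter.eventually_atTop.1 hω
  refine ⟨J, fun j hj k hk lam => ?_⟩
  obtain ⟨hUj, hVj⟩ := hJ j hj k hk
  have := hmfin j k lam ω
  refine half_measure_Icc_le_measure_iInter_Eset hb0 N (Sj j) ε η
    (fun n hn => (hη n ((hS j).trans_le hn)).le) (a lam) _ _ ?_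
  calc ∑' i, ENNReal.ofReal (Sq b N (Sj j + i) (ε (Sj j + i)) (η (Sj j + i)) (a lam)
          (m j k lam ω) (μ j k lam ω))
      ≤ ∑' i, ENNReal.ofReal (V j k (Sj j + i) ω) := ENNReal.tsum_le_tsum fun i =>
        ENNReal.ofReal_le_ofReal (hbω j k hk _ ((hSψ j).trans (Nat.le_add_right _ _)) lam).2
    _ ≤ ENNReal.ofReal ((b:ℝ) ^ (-(ρ j)) / 2) := hVj
    _ ≤ m j k lam ω (Set.Icc 0 1) / 2 := by
      rw [ENNReal.ofReal_div_of_pos two_pos, ENNReal.ofReal_ofNat]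
      gcongr
      exact ENNReal.ofReal_le_of_le_toReal (hUj.trans_le (hbω j k hk (ψ j) le_rfl lam).1).le

/-- Uniform growth speed in singularity sets.  Words `w ∈ A^j` are encoded by their index
`k < b^j`. -/
theorem uniform_growth_speed
    {Ω : Type*} [MeasurableSpace Ω] (P : Measure Ω) [IsProbabilityMeasure P]
    {Λ : Type*}
    (b : ℕ) (hb : 2 ≤ b) (N : ℕ) (hN : 1 ≤ N)
    (ε η : ℕ → ℝ) (hε : ∀ n, 1 ≤ n → 0 < ε n) (hη : ∀ n, 1 ≤ n → 0 < η n)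
    (ρ : ℕ → ℝ) (hρ : ∀ j, 0 < ρ j)
    (ψ Sj : ℕ → ℕ) (hψ : ∀ j, 0 < ψ j) (hS : ∀ j, 0 < Sj j) (hSψ : ∀ j, ψ j ≤ Sj j)
    (m μ : ℕ → ℕ → Λ → Ω → Measure ℝ)
    (hmfin : ∀ j k lam ω, IsFiniteMeasure (m j k lam ω))
    (hμfin : ∀ j k lam ω, IsFiniteMeasure (μ j k lam ω))
    (hmsupp : ∀ j k lam ω, m j k lam ω (Set.Icc (0:ℝ) 1)ᶜ = 0)
    (hμsupp : ∀ j k lam ω, μ j k lam ω (Set.Icc (0:ℝ) 1)ᶜ = 0)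
    (hμpos : ∀ j k lam ω n l, l < b ^ n → 0 < μ j k lam ω (badicI b n l))
    (a : Λ → ℝ) (ha : ∀ lam, 0 < a lam)
    (U : ℕ → ℕ → Ω → ℝ) (V : ℕ → ℕ → ℕ → Ω → ℝ)
    (U0 : Ω → ℝ) (V0 : ℕ → Ω → ℝ)
    (hU0meas : Measurable U0) (hV0meas : ∀ n, Measurable (V0 n))
    (hU0nn : ∀ ω, 0 ≤ U0 ω) (hV0nn : ∀ n ω, 0 ≤ V0 n ω)
    (hUmeas : ∀ j k, Measurable (U j k)) (hVmeas : ∀ j k n, Measurable (V j k n))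
    (hUnn : ∀ j k ω, 0 ≤ U j k ω) (hVnn : ∀ j k n ω, 0 ≤ V j k n ω)
    -- (i) identical distribution of the vectors `(U^w, (V^w_n)_n)`
    (hident : ∀ j k, k < b ^ j →
      Measure.map (fun ω => (U j k ω, fun n => V j k n ω)) P
        = Measure.map (fun ω => (U0 ω, fun n => V0 n ω)) P)
    -- (ii) almost sure bounds
    (hbound : ∀ᵐ ω ∂P, ∀ j k, k < b ^ j → ∀ n, ψ j ≤ n → ∀ lam : Λ,
      U j k ω ≤ (m j k lam ω (Set.Icc (0:ℝ) 1)).toReal ∧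
      Sq b N n (ε n) (η n) (a lam) (m j k lam ω) (μ j k lam ω) ≤ V j k n ω)
    -- summability conditions
    (hsumU : (∑' j : ℕ, ENNReal.ofReal ((b:ℝ) ^ j) *
        P {ω | U0 ω ≤ (b:ℝ) ^ (-(ρ j))}) ≠ ⊤)
    (hsumV : (∑' j : ℕ, ENNReal.ofReal ((b:ℝ) ^ j * (b:ℝ) ^ (ρ j)) *
        ∑' n : ℕ, ∫⁻ ω, ENNReal.ofReal (V0 (Sj j + n) ω) ∂P) ≠ ⊤) :
    ∀ᵐ ω ∂P, ∃ J : ℕ, ∀ j, J ≤ j → ∀ k, k < b ^ j → ∀ lam : Λ,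
      (m j k lam ω) (Set.Icc (0:ℝ) 1) / 2 ≤
        (m j k lam ω) (⋂ n ∈ {n : ℕ | Sj j ≤ n},
          (Eset b N n (ε n) (a lam) (-1) (μ j k lam ω) ∩
           Eset b N n (ε n) (a lam) 1 (μ j k lam ω))) :=
  uniform_growth_speed_general P b hb N ε η hη ρ ψ Sj hS hSψ m μ hmfin a U V U0 V0 hU0meas hV0meas
    hUmeas hVmeas hident hbound hsumU hsumV
end

section
/- Fix an integer b ≥ 2 and constants β > 0, η > 0 and η' > 2η. Let (ε_n)_{n≥2} be a sequence of positive reals with ε_n ≥ (log n)^{−η} for every n ≥ 2, and for j ≥ 2 set S_j = ⌊j (log j)^{η'}⌋ and ρ_j = (log j)^{1+η}. Then the double series ∑_{j≥2} b^{j} b^{ρ_j} ∑_{n≥S_j} n b^{−β n ε_n^2} converges. -/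
/-- `S_j = ⌊j (log j)^{η'}⌋`. -/
noncomputable def Sgrowth' (η' : ℝ) (j : ℕ) : ℕ :=
  ⌊(j : ℝ) * Real.log j ^ η'⌋₊

/-- The general term `n b^{-β n ε_n²}`. -/
noncomputable def termG (b : ℕ) (β : ℝ) (ε : ℕ → ℝ) (n : ℕ) : ℝ :=
  (n : ℝ) * (b : ℝ) ^ (-(β * (n : ℝ) * ε n ^ 2))

/-!
Since `ε_n² ≥ (log n)^{-2η}`, the inner terms are at most `n b^{-β φ(n)}` with
`φ(x) = x (log x)^{-2η}`, which is increasing for `x ≥ e^{2η}`. Splitting `b^{-β φ(n)}` into two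
halves bounds the inner sum from `S_j` on by `C b^{-β φ(S_j)/2}`, where `C = ∑ n b^{-β φ(n)/2} < ∞`.
As `η' > 2η`, `φ(S_j) ≈ j (log j)^{η' - 2η}` beats both `j` and `ρ_j = (log j)^{1+η}` by any
constant factor, so the `j`-th outer term is eventually at most `C b^{-j}`.
-/

open Real Filter Set

noncomputable def mulLogRpowNeg (a x : ℝ) : ℝ := x * log x ^ (-a)

lemma mulLogRpowNeg_eq_rpow_neg {a x : ℝ} (ha : 0 < a) (hx : 1 ≤ x) :
    mulLogRpowNeg a x = (log x / x ^ a⁻¹) ^ (-a) := by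
  have hx0 : 0 ≤ x := by linarith
  rw [div_rpow (log_nonneg hx) (rpow_nonneg hx0 _), ← rpow_mul hx0, mul_neg,
    inv_mul_cancel₀ ha.ne', rpow_neg_one, div_inv_eq_mul, mulLogRpowNeg, mul_comm]

lemma monotoneOn_mulLogRpowNeg {a : ℝ} (ha : 0 < a) :
    MonotoneOn (mulLogRpowNeg a) (Ici (exp a)) := by
  intro x hx y hy hxy
  have hx1 : 1 ≤ x := one_le_exp ha.le |>.trans hx
  have hy1 : 1 ≤ y := hx1.trans hxy
  rw [mulLogRpowNeg_eq_rpow_neg ha hx1, mulLogRpowNeg_eq_rpow_neg ha hy1]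
  have hanti := log_div_self_rpow_antitoneOn (inv_pos.2 ha)
  rw [inv_inv] at hanti
  refine rpow_le_rpow_of_nonpos ?_ (hanti hx hy hxy) (by linarith)
  have : 0 < log y := log_pos (lt_of_lt_of_le (one_lt_exp_iff.2 ha) (hx.trans hxy))
  positivity

lemma eventually_log_le_mul_mulLogRpowNeg (a : ℝ) {K : ℝ} (hK : 0 < K) :
    ∀ᶠ x : ℝ in atTop, log x ≤ K * mulLogRpowNeg a x := by
  filter_upwards [(isLittleO_log_rpow_rpow_atTop (1 + a) one_pos).bound hK,
    eventually_gt_atTop 1] with x hbound hx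
  have hlog : 0 < log x := log_pos hx
  rw [norm_of_nonneg (by positivity), norm_of_nonneg (by positivity), rpow_one] at hbound
  calc log x = log x ^ (1 + a) * log x ^ (-a) := by
        rw [← rpow_add hlog, add_neg_cancel_right, rpow_one]
    _ ≤ K * x * log x ^ (-a) := by gcongr
    _ = K * mulLogRpowNeg a x := by rw [mulLogRpowNeg, mul_assoc]

lemma summable_natCast_mul_rpow_neg_mulLogRpowNeg {b c : ℝ} (hb : 1 < b) (hc : 0 < c) (a : ℝ) :
    Summable fun n : ℕ => (n : ℝ) * b ^ (-(c * mulLogRpowNeg a n)) := by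
  have hlogb : 0 < log b := log_pos hb
  refine Summable.of_norm_bounded_eventually_nat (g := fun n : ℕ => (n : ℝ) ^ (-2 : ℝ))
    (summable_nat_rpow.2 (by norm_num)) ?_
  filter_upwards [tendsto_natCast_atTop_atTop.eventually
    (eventually_log_le_mul_mulLogRpowNeg a (by positivity : 0 < c * log b / 3)),
    eventually_ge_atTop 1] with n hlog hn
  have hn0 : (0 : ℝ) < n := by exact_mod_cast hn
  have hdecay : b ^ (-(c * mulLogRpowNeg a n)) ≤ (n : ℝ) ^ (-3 : ℝ) := by
    rw [rpow_def_of_pos (by linarith), rpow_def_of_pos hn0, exp_le_exp]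
    nlinarith
  rw [norm_of_nonneg (by positivity), show (-2 : ℝ) = -3 + 1 by norm_num,
    rpow_add_one hn0.ne', mul_comm]
  gcongr

lemma eventually_log_rpow_le_self (r : ℝ) : ∀ᶠ x : ℝ in atTop, log x ^ r ≤ x := by
  filter_upwards [(isLittleO_log_rpow_rpow_atTop r one_pos).bound one_pos,
    eventually_gt_atTop 1] with x hbound hx
  rwa [norm_of_nonneg (rpow_nonneg (log_pos hx).le _), one_mul, rpow_one,
    norm_of_nonneg (by linarith)] at hbound

lemma one_le_log_natCast {k : ℕ} (hk : 3 ≤ k) : 1 ≤ log k := by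
  have hk3 : (3 : ℝ) ≤ k := by exact_mod_cast hk
  rw [le_log_iff_exp_le (by positivity)]
  exact exp_one_lt_d9.le.trans (by norm_num; linarith)

lemma tendsto_sgrowth_atTop {η' : ℝ} (hη' : 0 ≤ η') : Tendsto (Sgrowth' η') atTop atTop := by
  refine tendsto_atTop_mono' _ ?_ tendsto_id
  filter_upwards [eventually_ge_atTop 3] with k hk
  exact Nat.le_floor (le_mul_of_one_le_right k.cast_nonneg
    (one_le_rpow (one_le_log_natCast hk) hη'))

/-- `S_k ≈ k (log k)^{η'}` and `log S_k ≈ log k`, so `φ_a(S_k) ≈ k (log k)^{η' - a}`. -/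
lemma eventually_mul_le_mulLogRpowNeg_sgrowth {a η' : ℝ} (ha : 0 ≤ a) (haη' : a < η') (C : ℝ) :
    ∀ᶠ k : ℕ in atTop, C * k ≤ mulLogRpowNeg a (Sgrowth' η' k) := by
  have hL : Tendsto (fun x : ℝ ↦ log x ^ (η' - a) * (2 ^ (-a) / 2)) atTop atTop :=
    ((tendsto_rpow_atTop (sub_pos.2 haη')).comp tendsto_log_atTop).atTop_mul_const
      (by positivity)
  filter_upwards [eventually_ge_atTop 4,
    tendsto_natCast_atTop_atTop.eventually (eventually_log_rpow_le_self η'),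
    tendsto_natCast_atTop_atTop.eventually (hL.eventually_ge_atTop C)] with k hk hpow hC
  set L := log k
  set x := k * L ^ η'
  set S := Sgrowth' η' k
  have hk4 : (4 : ℝ) ≤ k := by exact_mod_cast hk
  have hL1 : 1 ≤ L := one_le_log_natCast (by omega)
  have hkx : (k : ℝ) ≤ x := le_mul_of_one_le_right (by positivity) (one_le_rpow hL1 (by linarith))
  have hS_lo : x / 2 < S := Nat.div_two_lt_floor (by linarith)
  have hS_hi : (S : ℝ) ≤ k * k := (Nat.floor_le (by positivity)).trans (by gcongr)
  have hlogS : log S ≤ 2 * L := by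
    rw [two_mul, ← log_mul (by positivity) (by positivity)]
    exact log_le_log (by linarith) hS_hi
  calc C * k ≤ L ^ (η' - a) * (2 ^ (-a) / 2) * k := by gcongr
    _ = x / 2 * (2 * L) ^ (-a) := by
        rw [mul_rpow (by norm_num) (by positivity), sub_eq_add_neg, rpow_add (by positivity)]
        ring
    _ ≤ S * log S ^ (-a) :=
        mul_le_mul hS_lo.le (rpow_le_rpow_of_nonpos (log_pos (by linarith)) hlogS (by linarith))
          (by positivity) (by positivity)

section Series

variable {b : ℕ} {β η : ℝ} {ε : ℕ → ℝ}

lemma termG_nonneg (n : ℕ) : 0 ≤ termG b β ε n := by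
  unfold termG; positivity

lemma termG_le (hb : 1 ≤ b) (hβ : 0 ≤ β) {n : ℕ} (hεn : log n ^ (-η) ≤ ε n) :
    termG b β ε n ≤ n * (b : ℝ) ^ (-(β * mulLogRpowNeg (2 * η) n)) := by
  have hsq : log n ^ (-(2 * η)) ≤ ε n ^ 2 := by
    rw [neg_mul_eq_mul_neg, mul_comm, rpow_mul (log_natCast_nonneg n), rpow_two]
    exact pow_le_pow_left₀ (by positivity) hεn 2
  unfold termG mulLogRpowNeg
  refine mul_le_mul_of_nonneg_left (rpow_le_rpow_of_exponent_le (by exact_mod_cast hb) ?_)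
    n.cast_nonneg
  rw [neg_le_neg_iff, ← mul_assoc]
  exact mul_le_mul_of_nonneg_left hsq (by positivity)

lemma summable_termG (hb : 2 ≤ b) (hβ : 0 < β) (hε : ∀ n : ℕ, 2 ≤ n → log n ^ (-η) ≤ ε n) :
    Summable (termG b β ε) := by
  have hb1 : (1 : ℝ) < b := by exact_mod_cast hb
  refine (summable_nat_add_iff 2).1 <| Summable.of_nonneg_of_le (fun n ↦ termG_nonneg _)
    (fun n ↦ termG_le (by omega) hβ.le (hε (n + 2) (by omega))) ?_
  exact (summable_nat_add_iff 2).2 (summable_natCast_mul_rpow_neg_mulLogRpowNeg hb1 hβ _)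

lemma tsum_termG_add_le (hb : 2 ≤ b) (hβ : 0 < β) (hη : 0 < η)
    (hε : ∀ n : ℕ, 2 ≤ n → log n ^ (-η) ≤ ε n) {S : ℕ} (hS : exp (2 * η) ≤ S) :
    ∑' n, termG b β ε (S + n) ≤ (b : ℝ) ^ (-(β / 2 * mulLogRpowNeg (2 * η) S)) *
      ∑' n : ℕ, n * (b : ℝ) ^ (-(β / 2 * mulLogRpowNeg (2 * η) n)) := by
  set g : ℕ → ℝ := fun n ↦ n * (b : ℝ) ^ (-(β / 2 * mulLogRpowNeg (2 * η) n))
  set K := (b : ℝ) ^ (-(β / 2 * mulLogRpowNeg (2 * η) S))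
  have hb1 : (1 : ℝ) < b := by exact_mod_cast hb
  have hg : Summable g := summable_natCast_mul_rpow_neg_mulLogRpowNeg hb1 (by positivity) _
  have hS2 : 2 ≤ S := by
    have : (1 : ℝ) < S := (one_lt_exp_iff.2 (by positivity)).trans_le hS
    exact_mod_cast this
  have hpt (n : ℕ) : termG b β ε (S + n) ≤ K * g (S + n) := by
    have hmono : mulLogRpowNeg (2 * η) S ≤ mulLogRpowNeg (2 * η) (S + n : ℕ) :=
      have hle : (S : ℝ) ≤ (S + n : ℕ) := by exact_mod_cast S.le_add_right n
      monotoneOn_mulLogRpowNeg (by positivity) hS (hS.trans hle) hle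
    calc termG b β ε (S + n)
        ≤ (S + n : ℕ) * (b : ℝ) ^ (-(β * mulLogRpowNeg (2 * η) (S + n : ℕ))) :=
          termG_le (by omega) hβ.le (hε _ (by omega))
      _ ≤ (S + n : ℕ) * (b : ℝ) ^ (-(β / 2 * mulLogRpowNeg (2 * η) S) +
            -(β / 2 * mulLogRpowNeg (2 * η) (S + n : ℕ))) := by
          gcongr
          · exact hb1.le
          · nlinarith
      _ = K * g (S + n) := by rw [rpow_add (by positivity)]; ring
  calc ∑' n, termG b β ε (S + n) ≤ ∑' n, K * g (S + n) :=
        (summable_termG hb hβ hε).comp_injective (add_right_injective S) |>.tsum_le_tsum hpt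
          ((hg.comp_injective (add_right_injective S)).mul_left K)
    _ = K * ∑' n, g (S + n) := tsum_mul_left
    _ ≤ K * ∑' n, g n := mul_le_mul_of_nonneg_left
        (tsum_comp_le_tsum_of_inj hg (fun n ↦ by positivity) (add_right_injective S))
        (by positivity)

lemma outer_term_le_mul_inv_pow (hb : 2 ≤ b) (hβ : 0 < β) (hη : 0 < η)
    (hε : ∀ n : ℕ, 2 ≤ n → log n ^ (-η) ≤ ε n) {η' : ℝ} {k : ℕ}
    (hS : exp (2 * η) ≤ Sgrowth' η' k)
    (hgrowth : 3 * k ≤ β / 2 * mulLogRpowNeg (2 * η) (Sgrowth' η' k))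
    (hρ : log k ^ (1 + η) ≤ k) :
    (b : ℝ) ^ k * (b : ℝ) ^ (log k ^ (1 + η)) * ∑' n, termG b β ε (Sgrowth' η' k + n) ≤
      (∑' n : ℕ, n * (b : ℝ) ^ (-(β / 2 * mulLogRpowNeg (2 * η) n))) * (b : ℝ)⁻¹ ^ k := by
  set C := ∑' n : ℕ, n * (b : ℝ) ^ (-(β / 2 * mulLogRpowNeg (2 * η) n))
  have hb0 : (0 : ℝ) < b := by positivity
  have hC : 0 ≤ C := tsum_nonneg fun n ↦ by positivity
  calc (b : ℝ) ^ k * (b : ℝ) ^ (log k ^ (1 + η)) * ∑' n, termG b β ε (Sgrowth' η' k + n)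
      ≤ (b : ℝ) ^ k * (b : ℝ) ^ (log k ^ (1 + η)) *
          ((b : ℝ) ^ (-(β / 2 * mulLogRpowNeg (2 * η) (Sgrowth' η' k))) * C) := by
        gcongr
        exact tsum_termG_add_le hb hβ hη hε hS
    _ = C * (b : ℝ) ^
          (k + log k ^ (1 + η) + -(β / 2 * mulLogRpowNeg (2 * η) (Sgrowth' η' k))) := by
        rw [rpow_add hb0, rpow_add hb0, rpow_natCast]
        ring
    _ ≤ C * (b : ℝ) ^ (-(k : ℝ)) := by
        gcongr
        · exact_mod_cast (by omega : 1 ≤ b)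
        · linarith
    _ = C * (b : ℝ)⁻¹ ^ k := by rw [rpow_neg hb0.le, rpow_natCast, inv_pow]

end Series

theorem double_series_converges_slow_eps_general
    (b : ℕ) (hb : 2 ≤ b) (β η η' : ℝ) (hβ : 0 < β) (hη : 0 < η) (hη' : 2 * η < η')
    (ε : ℕ → ℝ)
    (hε : ∀ n : ℕ, 2 ≤ n → Real.log n ^ (-η) ≤ ε n) :
    (∀ j : ℕ, 2 ≤ j → Summable fun n : ℕ => termG b β ε (Sgrowth' η' j + n)) ∧
    Summable (fun j : ℕ => (b : ℝ) ^ (j + 2) *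
      (b : ℝ) ^ (Real.log ((j : ℝ) + 2) ^ (1 + η)) *
      ∑' n : ℕ, termG b β ε (Sgrowth' η' (j + 2) + n)) := by
  have hb1 : (1 : ℝ) < b := by exact_mod_cast hb
  refine ⟨fun j _ ↦ (summable_termG hb hβ hε).comp_injective (add_right_injective _), ?_⟩
  have hgrowth : ∀ᶠ k : ℕ in atTop, 3 * k ≤ β / 2 * mulLogRpowNeg (2 * η) (Sgrowth' η' k) := by
    filter_upwards [eventually_mul_le_mulLogRpowNeg_sgrowth (by positivity) hη' (6 / β)] with k hk
    calc (3 : ℝ) * k = β / 2 * (6 / β * k) := by field_simp; ring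
      _ ≤ _ := by gcongr
  have hS : ∀ᶠ k : ℕ in atTop, exp (2 * η) ≤ Sgrowth' η' k :=
    (tendsto_natCast_atTop_atTop.comp (tendsto_sgrowth_atTop (by linarith))).eventually_ge_atTop _
  have hρ := tendsto_natCast_atTop_atTop.eventually (eventually_log_rpow_le_self (1 + η))
  set C := ∑' n : ℕ, n * (b : ℝ) ^ (-(β / 2 * mulLogRpowNeg (2 * η) n))
  refine Summable.of_norm_bounded_eventually_nat
    (((summable_nat_add_iff 2).2 (summable_geometric_of_lt_one (by positivity)
      (inv_lt_one_of_one_lt₀ hb1))).mul_left C) ?_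
  filter_upwards [(tendsto_add_atTop_nat 2).eventually (hS.and (hgrowth.and hρ))]
    with j ⟨hSj, hgrowthj, hρj⟩
  have hterm := outer_term_le_mul_inv_pow hb hβ hη hε hSj hgrowthj hρj
  push_cast at hterm
  rwa [norm_of_nonneg (mul_nonneg (by positivity) (tsum_nonneg fun n ↦ termG_nonneg _))]

/-- If `ε_n ≥ (log n)^{-η}`, `S_j = ⌊j (log j)^{η'}⌋` with `η' > 2η` and
`ρ_j = (log j)^{1+η}`, then `∑_{j≥2} b^j b^{ρ_j} ∑_{n≥S_j} n b^{-β n ε_n²} < ∞`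
(inner series summable for each `j ≥ 2`, and the outer series summable). -/
theorem double_series_converges_slow_eps
    (b : ℕ) (hb : 2 ≤ b) (β η η' : ℝ) (hβ : 0 < β) (hη : 0 < η) (hη' : 2 * η < η')
    (ε : ℕ → ℝ) (hεpos : ∀ n, 2 ≤ n → 0 < ε n)
    (hε : ∀ n : ℕ, 2 ≤ n → Real.log n ^ (-η) ≤ ε n) :
    (∀ j : ℕ, 2 ≤ j → Summable fun n : ℕ => termG b β ε (Sgrowth' η' j + n)) ∧
    Summable (fun j : ℕ => (b : ℝ) ^ (j + 2) *
      (b : ℝ) ^ (Real.log ((j : ℝ) + 2) ^ (1 + η)) *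
      ∑' n : ℕ, termG b β ε (Sgrowth' η' (j + 2) + n)) :=
  double_series_converges_slow_eps_general b hb β η η' hβ hη hη' ε hε
end
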